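/- arXiv:math-ph/0610047 — 6 statements merged into one kernel-verified Lean document; each statement's English description precedes it below -/
import Mathlib

section
/- The function τ = y²/r², expressed via the coordinates X, Y on the adjoint quotient of SL(2,C), is not a smooth (C¹) function of X and Y at the points (X,Y) = (±2,0). -/
/-!
Restrict a candidate `f` to the real axis `Y = 0`, `g t = f (t, 0)`. The unit circle `r = 1` is
mapped onto the segment `[-2, 2]` by `x + iy ↦ 2x`, so `g t = 1 - t² / 4` there; the real
axis is mapped onto `|X| ≥ 2`, where `τ = 0`. Hence `g` has one-sided derivatives `-1` and `0`
at `2`, so `f` is not even differentiable at `(2, 0)`. The symmetry `x ↦ -x` preserves `τ` and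
negates `X`, which transfers the argument to `(-2, 0)`.
-/

open Set

/-- `f` is the function induced by `τ` on the quotient `ℂ^* / (z ~ 1/z)`, in the coordinates
`(X, Y)`. -/
def FactorsTau (f : ℝ × ℝ → ℝ) : Prop :=
  ∀ x y : ℝ, x ^ 2 + y ^ 2 ≠ 0 →
    f (x + x / (x ^ 2 + y ^ 2), y - y / (x ^ 2 + y ^ 2)) = y ^ 2 / (x ^ 2 + y ^ 2)

lemma exists_pos_add_inv_eq {t : ℝ} (ht : 2 ≤ t) : ∃ x : ℝ, 0 < x ∧ x + x⁻¹ = t := by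
  set s := √(t ^ 2 - 4)
  have hs : s ^ 2 = t ^ 2 - 4 := Real.sq_sqrt (by nlinarith)
  have hts : 0 < t + s := by positivity
  refine ⟨(t + s) / 2, by positivity, ?_⟩
  field_simp
  nlinarith

namespace FactorsTau

variable {f : ℝ × ℝ → ℝ}

lemma comp_neg_fst (hf : FactorsTau f) : FactorsTau fun p ↦ f (-p.1, p.2) := by
  intro x y hr
  have h := hf (-x) y (by rwa [neg_sq])
  rw [neg_sq] at h
  convert h using 3
  ring

lemma apply_of_mem_Icc (hf : FactorsTau f) {t : ℝ} (ht : t ∈ Icc (-2) 2) :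
    f (t, 0) = 1 - t ^ 2 / 4 := by
  have hy : √(1 - (t / 2) ^ 2) ^ 2 = 1 - (t / 2) ^ 2 := Real.sq_sqrt (by nlinarith [ht.1, ht.2])
  have hr : (t / 2) ^ 2 + √(1 - (t / 2) ^ 2) ^ 2 = 1 := by rw [hy]; ring
  have h := hf (t / 2) √(1 - (t / 2) ^ 2) (by rw [hr]; norm_num)
  rw [hr, div_one, div_one, sub_self, hy, add_halves] at h
  rw [h]
  ring

lemma apply_of_two_le (hf : FactorsTau f) {t : ℝ} (ht : 2 ≤ t) : f (t, 0) = 0 := by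
  obtain ⟨x, hx, rfl⟩ := exists_pos_add_inv_eq ht
  have h := hf x 0 (by positivity)
  have hinv : x / x ^ 2 = x⁻¹ := by field_simp
  simpa [hinv] using h

lemma not_differentiableAt_two (hf : FactorsTau f) : ¬ DifferentiableAt ℝ f (2, 0) := by
  intro hd
  have hg : HasDerivAt (fun t ↦ f (t, 0)) (deriv (fun t ↦ f (t, 0)) 2) 2 :=
    (hd.comp (2 : ℝ) (differentiableAt_id.prodMk (differentiableAt_const 0))).hasDerivAt
  have hleft : HasDerivWithinAt (fun t ↦ f (t, 0)) (-1) (Icc (-2) 2) 2 := by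
    have hpar : HasDerivAt (fun t : ℝ ↦ 1 - t ^ 2 / 4) (-1) 2 :=
      (((hasDerivAt_pow 2 (2 : ℝ)).div_const 4).const_sub 1).congr_deriv (by norm_num)
    exact hpar.hasDerivWithinAt.congr_of_mem (fun t ht ↦ hf.apply_of_mem_Icc ht)
      (right_mem_Icc.2 (by norm_num))
  have hright : HasDerivWithinAt (fun t ↦ f (t, 0)) 0 (Ici 2) 2 :=
    (hasDerivWithinAt_const 2 _ 0).congr_of_mem (fun t ht ↦ hf.apply_of_two_le ht) self_mem_Ici
  have h₁ := (uniqueDiffOn_Icc (by norm_num) 2 (right_mem_Icc.2 (by norm_num))).eq_deriv _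
    hg.hasDerivWithinAt hleft
  have h₂ := (uniqueDiffWithinAt_Ici 2).eq_deriv _ hg.hasDerivWithinAt hright
  norm_num [h₁] at h₂

lemma not_differentiableAt_neg_two (hf : FactorsTau f) : ¬ DifferentiableAt ℝ f (-2, 0) := by
  intro hd
  exact hf.comp_neg_fst.not_differentiableAt_two (hd.comp (2, 0) (by fun_prop))

end FactorsTau

/-- The function `τ = y²/r²` on the adjoint quotient of `SL(2,ℂ)`, expressed via
the coordinates `X = x + x/r²`, `Y = y - y/r²` (where `r² = x² + y²`), is not a
`C¹` function of `X` and `Y` at the two vertices `(X,Y) = (±2, 0)`: there is no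
function of `(X,Y)` that is `C¹` at `(2,0)` (resp. `(-2,0)`) and agrees with `τ`
via the quotient map. -/
theorem tau_not_smooth_at_vertices :
    (¬ ∃ f : ℝ × ℝ → ℝ, ContDiffAt ℝ 1 f (2, 0) ∧
      ∀ x y : ℝ, x ^ 2 + y ^ 2 ≠ 0 →
        f (x + x / (x ^ 2 + y ^ 2), y - y / (x ^ 2 + y ^ 2))
          = y ^ 2 / (x ^ 2 + y ^ 2)) ∧
    (¬ ∃ f : ℝ × ℝ → ℝ, ContDiffAt ℝ 1 f (-2, 0) ∧
      ∀ x y : ℝ, x ^ 2 + y ^ 2 ≠ 0 →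
        f (x + x / (x ^ 2 + y ^ 2), y - y / (x ^ 2 + y ^ 2))
          = y ^ 2 / (x ^ 2 + y ^ 2)) :=
  ⟨fun ⟨_, hC, hf⟩ ↦ FactorsTau.not_differentiableAt_two hf (hC.differentiableAt one_ne_zero),
    fun ⟨_, hC, hf⟩ ↦ FactorsTau.not_differentiableAt_neg_two hf (hC.differentiableAt one_ne_zero)⟩
end

section
/- Let (A, {·,·}) be a Poisson algebra over R, let D_A be the A-module of Kähler differentials of A, and define [a·du, b·dv] = a{u,b}dv + b{a,v}du + ab·d{u,v} for a,b,u,v ∈ A. Then this bracket is well-defined, skew-symmetric, and satisfies the Jacobi identity, making D_A a Lie algebra. -/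
/-- A Poisson bracket on a commutative ℝ-algebra `A`: an ℝ-bilinear Lie bracket
which is a derivation in each argument. -/
def IsPoissonBracket {A : Type*} [CommRing A] [Algebra ℝ A] (P : A → A → A) : Prop :=
  (∀ a b c : A, P (a + b) c = P a c + P b c) ∧
  (∀ a b c : A, P a (b + c) = P a b + P a c) ∧
  (∀ (r : ℝ) (a b : A), P (r • a) b = r • P a b) ∧
  (∀ a : A, P a a = 0) ∧
  (∀ a b c : A, P a (P b c) + P b (P c a) + P c (P a b) = 0) ∧
  (∀ a b c : A, P a (b * c) = P a b * c + b * P a c)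

/-!
The bracket is the Koszul bracket `[α, β] = L_{X_α} β - L_{X_β} α - d π(α, β)` of the Poisson
bivector `π(du, dv) = {u, v}`, where `X_α = π(α, d ·)` is the anchor and `L` the Lie derivative on
`Ω[A⁄ℝ]`. Written this way it is well defined and biadditive, and skew because `π` is. It satisfies
`[α, f β] = f [α, β] + X_α(f) β` and `X_{[α, β]} = [X_α, X_β]`, which make the Jacobiator
`A`-linear in each argument; so the Jacobi identity only has to be checked on exact forms, where
`[du, dv] = d{u, v}` reduces it to the Jacobi identity of `{·,·}`.
-/

open KaehlerDifferential Finsupp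

section

variable {R S : Type*} [CommRing R] [CommRing S] [Algebra R S]

theorem KaehlerDifferential.eq_zero_of_vanishes_on_D {M : Type*} [AddCommGroup M] [Module S M]
    [Module R M] [IsScalarTower R S M]
    (F : Ω[S⁄R] → M) (map_add : ∀ x y, F (x + y) = F x + F y)
    (map_smul : ∀ (a : S) x, F (a • x) = a • F x) (hD : ∀ s, F (D R S s) = 0) (ω : Ω[S⁄R]) :
    F ω = 0 :=
  LinearMap.congr_fun (Derivation.liftKaehlerDifferential_unique (R := R)
    ⟨⟨F, map_add⟩, map_smul⟩ 0 (by ext; simp [hD])) ω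

theorem KaehlerDifferential.eq_zero_of_vanishes_on_D_D {M : Type*} [AddCommGroup M] [Module S M]
    [Module R M] [IsScalarTower R S M] (F : Ω[S⁄R] → Ω[S⁄R] → M)
    (swap : ∀ α β, F β α = -F α β) (map_add_right : ∀ α β γ, F α (β + γ) = F α β + F α γ)
    (map_smul_right : ∀ α (f : S) β, F α (f • β) = f • F α β)
    (hD : ∀ u v, F (D R S u) (D R S v) = 0) (α β : Ω[S⁄R]) : F α β = 0 := by
  refine eq_zero_of_vanishes_on_D (F α) (map_add_right α) (map_smul_right α) (fun v => ?_) β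
  rw [swap, neg_eq_zero]
  exact eq_zero_of_vanishes_on_D _ (map_add_right _) (map_smul_right _)
    (fun u => by rw [swap, hD, neg_zero]) α

namespace Derivation

theorem commutator_smul_right (X Y : Derivation R S S) (f : S) :
    ⁅X, f • Y⁆ = f • ⁅X, Y⁆ + X f • Y := by
  ext a
  simp only [commutator_apply, smul_apply, add_apply, smul_eq_mul, leibniz]
  ring

variable (X : Derivation R S S)

noncomputable def lieDerivativeFree : (S →₀ S) →ₗ[R] Ω[S⁄R] :=
  (linearCombination S (D R S)).restrictScalars R ∘ₗ mapRange.linearMap X.toLinearMap +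
    (linearCombination S (fun v => D R S (X v))).restrictScalars R

@[simp]
theorem lieDerivativeFree_single (v b : S) :
    X.lieDerivativeFree (single v b) = X b • D R S v + b • D R S (X v) := by
  simp [lieDerivativeFree]

theorem lieDerivativeFree_smul (f : S) (x : S →₀ S) :
    X.lieDerivativeFree (f • x) =
      X f • linearCombination S (D R S) x + f • X.lieDerivativeFree x := by
  induction x using Finsupp.induction_linear with
  | zero => simp
  | add x y hx hy => simp only [smul_add, map_add, hx, hy]; module
  | single v b =>
    simp only [smul_single, lieDerivativeFree_single, linearCombination_single, smul_eq_mul,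
      leibniz]
    module

theorem lieDerivativeFree_eq_zero_of_mem_kerTotal {x : S →₀ S} (hx : x ∈ kerTotal R S) :
    X.lieDerivativeFree x = 0 := by
  induction hx using Submodule.span_induction with
  | mem x hx =>
    obtain (⟨⟨y, z⟩, rfl⟩ | ⟨⟨y, z⟩, rfl⟩) | ⟨r, rfl⟩ := hx
    · simp
    · simp only [map_add, map_sub, lieDerivativeFree_single, leibniz, (D R S).leibniz,
        map_one_eq_zero, smul_eq_mul]
      module
    · simp
  | zero => simp
  | add x y _ _ hx hy => rw [map_add, hx, hy, add_zero]
  | smul f x hx hfx =>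
    have hx' : linearCombination S (D R S) x = 0 := by rwa [← LinearMap.mem_ker, kerTotal_eq]
    rw [lieDerivativeFree_smul, hfx, hx', smul_zero, smul_zero, add_zero]

noncomputable def lieDerivative : Ω[S⁄R] →ₗ[R] Ω[S⁄R] :=
  (LinearMap.ker ((linearCombination S (D R S)).restrictScalars R)).liftQ X.lieDerivativeFree
      (fun x hx => X.lieDerivativeFree_eq_zero_of_mem_kerTotal (by
        rwa [LinearMap.ker_restrictScalars, kerTotal_eq] at hx)) ∘ₗ
    (LinearMap.quotKerEquivOfSurjective ((linearCombination S (D R S)).restrictScalars R)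
      (linearCombination_surjective R S)).symm.toLinearMap

theorem lieDerivative_linearCombination (x : S →₀ S) :
    X.lieDerivative (linearCombination S (D R S) x) = X.lieDerivativeFree x := by
  rw [lieDerivative, LinearMap.comp_apply, LinearEquiv.coe_coe]
  exact congrArg _ (LinearMap.quotKerEquivOfSurjective_symm_apply _ _ x)

theorem lieDerivative_smul (f : S) (ω : Ω[S⁄R]) :
    X.lieDerivative (f • ω) = X f • ω + f • X.lieDerivative ω := by
  obtain ⟨x, rfl⟩ := linearCombination_surjective R S ω
  rw [← LinearMap.map_smul, lieDerivative_linearCombination, lieDerivative_linearCombination,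
    lieDerivativeFree_smul]

theorem lieDerivative_D (v : S) : X.lieDerivative (D R S v) = D R S (X v) := by
  simpa using X.lieDerivative_linearCombination (single v 1)

theorem lieDerivative_add (Y : Derivation R S S) (ω : Ω[S⁄R]) :
    (X + Y).lieDerivative ω = X.lieDerivative ω + Y.lieDerivative ω := by
  refine sub_eq_zero.mp (eq_zero_of_vanishes_on_D
    (fun ω => (X + Y).lieDerivative ω - (X.lieDerivative ω + Y.lieDerivative ω)) ?_ ?_ ?_ ω)
  · intro ω η
    simp only [map_add]
    abel
  · intro f ω
    simp only [lieDerivative_smul, add_apply]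
    module
  · intro v
    simp only [lieDerivative_D, add_apply, map_add, sub_self]

@[simp]
theorem lieDerivative_zero (ω : Ω[S⁄R]) : (0 : Derivation R S S).lieDerivative ω = 0 := by
  simpa using lieDerivative_add 0 0 ω

theorem lieDerivative_smul_derivation (f : S) (ω : Ω[S⁄R]) :
    (f • X).lieDerivative ω = f • X.lieDerivative ω + X.liftKaehlerDifferential ω • D R S f := by
  refine sub_eq_zero.mp (eq_zero_of_vanishes_on_D (fun ω => (f • X).lieDerivative ω -
    (f • X.lieDerivative ω + X.liftKaehlerDifferential ω • D R S f)) ?_ ?_ ?_ ω)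
  · intro ω η
    simp only [map_add]
    module
  · intro g ω
    simp only [lieDerivative_smul, smul_apply, LinearMap.map_smul, smul_eq_mul]
    module
  · intro v
    simp [lieDerivative_D, leibniz]

end Derivation

end

namespace IsPoissonBracket

variable {A : Type*} [CommRing A] [Algebra ℝ A] {P : A → A → A} (hP : IsPoissonBracket P)
include hP

theorem map_add_left (a b c : A) : P (a + b) c = P a c + P b c := hP.1 a b c

theorem map_add_right (a b c : A) : P a (b + c) = P a b + P a c := hP.2.1 a b c

theorem map_smul_left (r : ℝ) (a b : A) : P (r • a) b = r • P a b := hP.2.2.1 r a b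

theorem apply_self (a : A) : P a a = 0 := hP.2.2.2.1 a

theorem jacobi (a b c : A) : P a (P b c) + P b (P c a) + P c (P a b) = 0 := hP.2.2.2.2.1 a b c

theorem leibniz_right (a b c : A) : P a (b * c) = P a b * c + b * P a c := hP.2.2.2.2.2 a b c

theorem skew (a b : A) : P a b = -P b a := by
  have h := hP.apply_self (a + b)
  rw [hP.map_add_left, hP.map_add_right, hP.map_add_right, hP.apply_self, hP.apply_self] at h
  linear_combination h

theorem map_smul_right (r : ℝ) (a b : A) : P a (r • b) = r • P a b := by
  rw [hP.skew, hP.map_smul_left, hP.skew b, smul_neg, neg_neg]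

theorem leibniz_left (a b c : A) : P (a * b) c = a * P b c + b * P a c := by
  linear_combination hP.skew (a * b) c - hP.leibniz_right c a b - b * hP.skew a c - a * hP.skew b c

theorem map_one_right (a : A) : P a 1 = 0 := by
  have h := hP.leibniz_right a 1 1
  rw [mul_one, one_mul, mul_one] at h
  linear_combination -h

noncomputable def hamiltonianDerivation (u : A) : Derivation ℝ A A where
  toFun := P u
  map_add' := hP.map_add_right u
  map_smul' r := hP.map_smul_right r u
  map_one_eq_zero' := hP.map_one_right u
  leibniz' b c := by simp only [smul_eq_mul]; linear_combination hP.leibniz_right u b c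

@[simp]
theorem hamiltonianDerivation_apply (u v : A) : hP.hamiltonianDerivation u v = P u v := rfl

theorem hamiltonianDerivation_bracket (u v : A) :
    hP.hamiltonianDerivation (P u v) =
      ⁅hP.hamiltonianDerivation u, hP.hamiltonianDerivation v⁆ := by
  ext f
  have hvfu : P v (P f u) = -P v (P u f) := by
    rw [hP.skew f u]; exact (hP.hamiltonianDerivation v).map_neg _
  simp only [hamiltonianDerivation_apply, Derivation.commutator_apply]
  linear_combination hP.skew (P u v) f - hP.jacobi u v f + hvfu

noncomputable def hamiltonian : Derivation ℝ A (Derivation ℝ A A) where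
  toFun := hP.hamiltonianDerivation
  map_add' u v := by ext; exact hP.map_add_left u v _
  map_smul' r u := by ext; exact hP.map_smul_left r u _
  map_one_eq_zero' := by ext v; simpa [hP.skew 1] using hP.map_one_right v
  leibniz' u v := by ext w; exact hP.leibniz_left u v w

noncomputable def anchor : Ω[A⁄ℝ] →ₗ[A] Derivation ℝ A A :=
  hP.hamiltonian.liftKaehlerDifferential

/-- The Poisson bivector: `pairing (a • D u) (b • D v) = a * b * P u v`. -/
noncomputable def pairing : Ω[A⁄ℝ] →ₗ[A] Ω[A⁄ℝ] →ₗ[A] A :=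
  (linearMapEquivDerivation ℝ A).symm.toLinearMap ∘ₗ hP.anchor

@[simp]
theorem anchor_D (u : A) : hP.anchor (D ℝ A u) = hP.hamiltonianDerivation u :=
  hP.hamiltonian.liftKaehlerDifferential_comp_D u

@[simp]
theorem pairing_apply_D (α : Ω[A⁄ℝ]) (f : A) : hP.pairing α (D ℝ A f) = hP.anchor α f := by
  simp [pairing]

theorem pairing_swap (α β : Ω[A⁄ℝ]) : hP.pairing β α = -hP.pairing α β := by
  have h : hP.pairing.flip = -hP.pairing := by ext u v; simp [hP.skew v u]
  exact LinearMap.congr_fun₂ h α β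

theorem pairing_apply (α β : Ω[A⁄ℝ]) :
    hP.pairing α β = (hP.anchor α).liftKaehlerDifferential β := rfl

noncomputable def koszulBracket (α : Ω[A⁄ℝ]) : Ω[A⁄ℝ] →+ Ω[A⁄ℝ] where
  toFun β := (hP.anchor α).lieDerivative β - (hP.anchor β).lieDerivative α - D ℝ A (hP.pairing α β)
  map_zero' := by simp
  map_add' β γ := by
    simp only [map_add, Derivation.lieDerivative_add]
    abel

theorem koszulBracket_apply (α β : Ω[A⁄ℝ]) : hP.koszulBracket α β =
    (hP.anchor α).lieDerivative β - (hP.anchor β).lieDerivative α - D ℝ A (hP.pairing α β) := rfl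

theorem koszulBracket_swap (α β : Ω[A⁄ℝ]) : hP.koszulBracket β α = -hP.koszulBracket α β := by
  simp only [koszulBracket_apply, hP.pairing_swap β α, map_neg]
  abel

theorem koszulBracket_add_left (α β γ : Ω[A⁄ℝ]) :
    hP.koszulBracket (α + β) γ = hP.koszulBracket α γ + hP.koszulBracket β γ := by
  rw [← neg_neg (hP.koszulBracket (α + β) γ), ← koszulBracket_swap, map_add, neg_add,
    ← koszulBracket_swap, ← koszulBracket_swap]

theorem koszulBracket_smul_right (α β : Ω[A⁄ℝ]) (f : A) :
    hP.koszulBracket α (f • β) = f • hP.koszulBracket α β + hP.anchor α f • β := by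
  simp only [koszulBracket_apply, map_smul, smul_eq_mul,
    Derivation.lieDerivative_smul, Derivation.lieDerivative_smul_derivation, ← pairing_apply,
    hP.pairing_swap β α, Derivation.leibniz]
  module

theorem koszulBracket_D_D (u v : A) :
    hP.koszulBracket (D ℝ A u) (D ℝ A v) = D ℝ A (P u v) := by
  simp [koszulBracket_apply, Derivation.lieDerivative_D, hP.skew v u]

theorem anchor_koszulBracket (α β : Ω[A⁄ℝ]) :
    hP.anchor (hP.koszulBracket α β) = ⁅hP.anchor α, hP.anchor β⁆ := by
  rw [← sub_eq_zero]
  refine eq_zero_of_vanishes_on_D_D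
    (fun α β => hP.anchor (hP.koszulBracket α β) - ⁅hP.anchor α, hP.anchor β⁆) ?_ ?_ ?_ ?_ α β
  · intro α β
    rw [koszulBracket_swap, map_neg, ← lie_skew]
    abel
  · intro α β γ
    simp only [map_add, lie_add]
    abel
  · intro α f β
    simp only [koszulBracket_smul_right, map_add, map_smul, Derivation.commutator_smul_right]
    module
  · intro u v
    simp [koszulBracket_D_D, hamiltonianDerivation_bracket]

noncomputable def jacobiator (α β γ : Ω[A⁄ℝ]) : Ω[A⁄ℝ] :=
  hP.koszulBracket α (hP.koszulBracket β γ) + hP.koszulBracket β (hP.koszulBracket γ α) +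
    hP.koszulBracket γ (hP.koszulBracket α β)

theorem jacobiator_rotate (α β γ : Ω[A⁄ℝ]) : hP.jacobiator α β γ = hP.jacobiator γ α β := by
  simp only [jacobiator]
  abel

theorem jacobiator_add_right (α β γ δ : Ω[A⁄ℝ]) :
    hP.jacobiator α β (γ + δ) = hP.jacobiator α β γ + hP.jacobiator α β δ := by
  simp only [jacobiator, map_add, koszulBracket_add_left]
  abel

theorem jacobiator_smul_right (α β γ : Ω[A⁄ℝ]) (f : A) :
    hP.jacobiator α β (f • γ) = f • hP.jacobiator α β γ := by
  have hX : hP.anchor α (hP.anchor β f) - hP.anchor β (hP.anchor α f) =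
      hP.anchor (hP.koszulBracket α β) f := by
    rw [anchor_koszulBracket, Derivation.commutator_apply]
  rw [jacobiator, jacobiator, hP.koszulBracket_swap α (f • γ),
    hP.koszulBracket_swap (hP.koszulBracket α β) (f • γ), hP.koszulBracket_swap α γ,
    hP.koszulBracket_swap (hP.koszulBracket α β) γ]
  simp only [koszulBracket_smul_right, map_neg, map_add, ← hX]
  module

theorem jacobiator_D_D_D (u v w : A) : hP.jacobiator (D ℝ A u) (D ℝ A v) (D ℝ A w) = 0 := by
  simp only [jacobiator, koszulBracket_D_D, ← map_add, hP.jacobi, map_zero]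

theorem jacobiator_eq_zero (α β γ : Ω[A⁄ℝ]) : hP.jacobiator α β γ = 0 := by
  -- each rotation brings the next argument into the `A`-linear last slot
  refine eq_zero_of_vanishes_on_D (hP.jacobiator α β) (hP.jacobiator_add_right α β)
    (fun f γ => hP.jacobiator_smul_right α β γ f) (fun w => ?_) γ
  rw [jacobiator_rotate]
  refine eq_zero_of_vanishes_on_D (hP.jacobiator (D ℝ A w) α) (hP.jacobiator_add_right _ α)
    (fun f β => hP.jacobiator_smul_right _ α β f) (fun v => ?_) β
  rw [jacobiator_rotate]
  refine eq_zero_of_vanishes_on_D (hP.jacobiator (D ℝ A v) (D ℝ A w))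
    (hP.jacobiator_add_right _ _) (fun f α => hP.jacobiator_smul_right _ _ α f) (fun u => ?_) α
  rw [jacobiator_rotate]
  exact hP.jacobiator_D_D_D u v w

theorem koszulBracket_smul_D_smul_D (a b u v : A) :
    hP.koszulBracket (a • D ℝ A u) (b • D ℝ A v) =
      (a * P u b) • D ℝ A v + (b * P a v) • D ℝ A u + (a * b) • D ℝ A (P u v) := by
  rw [koszulBracket_smul_right, hP.koszulBracket_swap (D ℝ A v), koszulBracket_smul_right,
    koszulBracket_D_D, hP.skew v u]
  simp only [map_smul, anchor_D, Derivation.smul_apply, smul_eq_mul, hamiltonianDerivation_apply,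
    map_neg, hP.skew v a]
  module

end IsPoissonBracket

open KaehlerDifferential in
/-- For a Poisson algebra `(A, {·,·})`, the formula
`[a du, b dv] = a{u,b} dv + b{a,v} du + ab d{u,v}` yields a well-defined
skew-symmetric bracket on the `A`-module `Ω[A⁄ℝ]` of Kähler differentials which
satisfies the Jacobi identity, i.e. a Lie algebra structure on `Ω[A⁄ℝ]`. -/
theorem kaehler_differentials_lie_bracket {A : Type*} [CommRing A] [Algebra ℝ A]
    (P : A → A → A) (hP : IsPoissonBracket P) :
    ∃ B : Ω[A⁄ℝ] → Ω[A⁄ℝ] → Ω[A⁄ℝ],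
      (∀ α β γ : Ω[A⁄ℝ], B (α + β) γ = B α γ + B β γ) ∧
      (∀ α β γ : Ω[A⁄ℝ], B α (β + γ) = B α β + B α γ) ∧
      (∀ α β : Ω[A⁄ℝ], B α β = - B β α) ∧
      (∀ α β γ : Ω[A⁄ℝ], B α (B β γ) + B β (B γ α) + B γ (B α β) = 0) ∧
      (∀ a b u v : A,
        B (a • D ℝ A u) (b • D ℝ A v) =
          (a * P u b) • D ℝ A v + (b * P a v) • D ℝ A u +
            (a * b) • D ℝ A (P u v)) :=
  ⟨fun α β => hP.koszulBracket α β, hP.koszulBracket_add_left, fun _ => map_add _,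
    fun α β => hP.koszulBracket_swap β α, hP.jacobiator_eq_zero, hP.koszulBracket_smul_D_smul_D⟩
end

section
/- Let (A,{·,·}) be a Poisson algebra and (M, χ) a prequantum module, so χ(a,0) = i·a·Id_M for a ∈ A. Define â : M → M by â(x) = (1/i)χ(0,da)(x) + a·x. Then the Dirac condition holds: for all a, b ∈ A, the operator associated to {a,b} equals i·[â, b̂], and moreover r̂ = r·Id for every real constant r ∈ A. -/
open KaehlerDifferential in
/-- Prequantization satisfies the Dirac condition.  Let `(A, {·,·})` be a Poisson
algebra over ℝ and `(M, χ)` a prequantum module:  `M` is a complex vector space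
with an `A`-module structure `ρ` (by ℂ-linear operators, constants `r ∈ ℝ ⊆ A`
acting as `r·Id`), and `χ : L̄ = A ⊕ D_A → End_ℂ(M)` is an additive Lie algebra
action, with respect to the bracket
`[(a,du),(b,dv)] = ({u,b}+{a,v}-{u,v}, d{u,v})` on `L̄`, such that
`χ(a,0) = i·a·Id_M`.  Define `â(x) = (1/i)·χ(0,da)(x) + a·x`.  Then the Dirac
condition `widehat{{a,b}} = i[â, b̂]` holds, and `r̂ = r·Id` for every real
constant `r`. -/
theorem prequantization_dirac_condition {A : Type*} [CommRing A] [Algebra ℝ A]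
    (P : A → A → A) (hP : IsPoissonBracket P)
    {M : Type*} [AddCommGroup M] [Module ℂ M]
    (ρ : A → (M →ₗ[ℂ] M))
    (hρ_const : ∀ r : ℝ, ρ (algebraMap ℝ A r) = (r : ℂ) • LinearMap.id)
    (χ : A × Ω[A⁄ℝ] → (M →ₗ[ℂ] M))
    (hχ_add : ∀ l m, χ (l + m) = χ l + χ m)
    (hχ_lie : ∀ a b u v : A,
      χ (P u b + P a v - P u v, D ℝ A (P u v))
        = χ (a, D ℝ A u) ∘ₗ χ (b, D ℝ A v) - χ (b, D ℝ A v) ∘ₗ χ (a, D ℝ A u))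
    (hχ_const : ∀ a : A, χ (a, 0) = Complex.I • ρ a)
    -- the prequantum operators  â(x) = (1/i)·χ(0,da)(x) + a·x
    (hat : A → (M →ₗ[ℂ] M))
    (hhat : ∀ a : A, hat a = Complex.I⁻¹ • χ (0, D ℝ A a) + ρ a) :
    (∀ a b : A,
      hat (P a b) = Complex.I • (hat a ∘ₗ hat b - hat b ∘ₗ hat a)) ∧
    (∀ r : ℝ, hat (algebraMap ℝ A r) = (r : ℂ) • LinearMap.id) := by
  have hχ0 : χ 0 = 0 := by
    have h := hχ_add 0 0
    simp only [add_zero] at h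
    exact (left_eq_add.mp h)
  have key : ∀ a : A, hat a = Complex.I⁻¹ • χ (a, D ℝ A a) := by
    intro a
    have h : ((a, D ℝ A a) : A × Ω[A⁄ℝ]) = (0, D ℝ A a) + (a, 0) := by simp
    rw [hhat, h, hχ_add, hχ_const, smul_add, smul_smul,
      inv_mul_cancel₀ Complex.I_ne_zero, one_smul]
  constructor
  · intro a b
    have hlie := hχ_lie a b a b
    rw [add_sub_cancel_right] at hlie
    rw [key, key, key, hlie]
    ext x
    simp [smul_smul, smul_sub, Complex.ext_iff]
  · intro r
    rw [hhat, Derivation.map_algebraMap, hρ_const]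
    have : ((0, (0 : Ω[A⁄ℝ])) : A × Ω[A⁄ℝ]) = 0 := rfl
    rw [this, hχ0, smul_zero, zero_add]
end

section
/- The bracket on L̄ = A ⊕ D_A given by [(a,du),(b,dv)] = ({u,b} + {a,v} - {u,v}, d{u,v}) is a Lie bracket (skew-symmetric and satisfying Jacobi), the projection L̄ → D_A is a Lie algebra morphism, and its kernel A is a Lie ideal on which the bracket is zero, i.e. the bracket of two kernel elements vanishes. -/
namespace PoissonExt

open KaehlerDifferential

variable {A : Type*} [CommRing A] [Algebra ℝ A] (P : A → A → A)

theorem psk (hP : IsPoissonBracket P) (a b : A) : P a b + P b a = 0 := by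
  obtain ⟨h1, h2, h3, h4, h5, h6⟩ := hP
  have := h4 (a + b)
  rw [h1, h2, h2, h4, h4] at this
  linear_combination this

theorem psk' (hP : IsPoissonBracket P) (a b : A) : P b a = - P a b := by
  linear_combination psk P hP a b

theorem psmul2 (hP : IsPoissonBracket P) (r : ℝ) (a b : A) :
    P a (r • b) = r • P a b := by
  rw [psk' P hP, hP.2.2.1, psk' P hP, smul_neg, neg_neg]

theorem pone2 (hP : IsPoissonBracket P) (a : A) : P a 1 = 0 := by
  have h := hP.2.2.2.2.2 a 1 1
  rw [mul_one, one_mul] at h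
  linear_combination -h

theorem pone1 (hP : IsPoissonBracket P) (a : A) : P 1 a = 0 := by
  rw [psk' P hP, pone2 P hP, neg_zero]

theorem pleib1 (hP : IsPoissonBracket P) (a b c : A) :
    P (a * b) c = P a c * b + a * P b c := by
  rw [psk' P hP, hP.2.2.2.2.2, psk' P hP c a, psk' P hP c b]; ring

/-- The Hamiltonian derivation `a ↦ P a v`. -/
noncomputable def ham (hP : IsPoissonBracket P) (v : A) : Derivation ℝ A A where
  toFun a := P a v
  map_add' a b := hP.1 a b v
  map_smul' r a := hP.2.2.1 r a v
  map_one_eq_zero' := pone1 P hP v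
  leibniz' a b := by
    show P (a * b) v = a • P b v + b • P a v
    rw [smul_eq_mul, smul_eq_mul, pleib1 P hP]; ring

@[simp] theorem ham_apply (hP : IsPoissonBracket P) (v a : A) :
    ham P hP v a = P a v := rfl

/-- `v ↦ ham v` as a derivation into the `A`-module of derivations. -/
noncomputable def hamD (hP : IsPoissonBracket P) :
    Derivation ℝ A (Derivation ℝ A A) where
  toFun v := ham P hP v
  map_add' v w := by ext a; simp [hP.2.1]
  map_smul' r v := by ext a; simp [psmul2 P hP]
  map_one_eq_zero' := by ext a; simp [pone2 P hP]
  leibniz' v w := by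
    ext a
    show P a (v * w) = v * P a w + w * P a v
    rw [hP.2.2.2.2.2]; ring

/-- The anchor map `Ω → Der(A)`. -/
noncomputable def anchor (hP : IsPoissonBracket P) :
    Ω[A⁄ℝ] →ₗ[A] Derivation ℝ A A :=
  (hamD P hP).liftKaehlerDifferential

@[simp] theorem anchor_d (hP : IsPoissonBracket P) (u a : A) :
    anchor P hP (D ℝ A u) a = P a u := by
  rw [anchor, Derivation.liftKaehlerDifferential_comp_D]; rfl

@[simp] theorem anchor_smul_d (hP : IsPoissonBracket P) (x u a : A) :
    anchor P hP (x • D ℝ A u) a = x * P a u := by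
  rw [map_smul, Derivation.smul_apply, anchor_d, smul_eq_mul]

/-- The pairing `⟨ω, η⟩` with `⟨du, dv⟩ = P u v`. -/
noncomputable def pairF (hP : IsPoissonBracket P) (ω η : Ω[A⁄ℝ]) : A :=
  (anchor P hP η).liftKaehlerDifferential ω

theorem pair_add_left (hP : IsPoissonBracket P) (ω ω' η : Ω[A⁄ℝ]) :
    pairF P hP (ω + ω') η = pairF P hP ω η + pairF P hP ω' η := map_add _ _ _

theorem lift_eq_symm (X : Derivation ℝ A A) :
    X.liftKaehlerDifferential = (KaehlerDifferential.linearMapEquivDerivation ℝ A).symm X := rfl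

theorem pair_add_right (hP : IsPoissonBracket P) (ω η η' : Ω[A⁄ℝ]) :
    pairF P hP ω (η + η') = pairF P hP ω η + pairF P hP ω η' := by
  unfold pairF
  rw [lift_eq_symm, lift_eq_symm, lift_eq_symm, map_add, map_add, LinearMap.add_apply]

@[simp] theorem pair_gen (hP : IsPoissonBracket P) (x u y v : A) :
    pairF P hP (x • D ℝ A u) (y • D ℝ A v) = x * (y * P u v) := by
  unfold pairF
  rw [map_smul, smul_eq_mul]
  congr 1
  rw [Derivation.liftKaehlerDifferential_comp_D, anchor_smul_d]

/-- Induction principle for Kähler differentials. -/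
theorem omega_ind {Q : Ω[A⁄ℝ] → Prop} (h0 : Q 0)
    (hg : ∀ (a u : A), Q (a • D ℝ A u))
    (ha : ∀ x y, Q x → Q y → Q (x + y)) (ω : Ω[A⁄ℝ]) : Q ω := by
  have hmem : ω ∈ Submodule.span A (Set.range (D ℝ A)) := by
    rw [KaehlerDifferential.span_range_derivation]; trivial
  have key : ∀ x ∈ Submodule.span A (Set.range (D ℝ A)), ∀ a : A, Q (a • x) := by
    intro x hx
    induction hx using Submodule.span_induction with
    | mem x h => obtain ⟨u, rfl⟩ := h; intro a; exact hg a u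
    | zero => intro a; simpa using h0
    | add x y hx hy qx qy => intro a; rw [smul_add]; exact ha _ _ (qx a) (qy a)
    | smul b x hx qx => intro a; rw [smul_smul]; exact qx (a * b)
  simpa using key ω hmem 1

/-- Type synonym for the twisted module `Ω ⊕ Ω` attached to a derivation `X`. -/
def TW (_X : Derivation ℝ A A) : Type _ := Ω[A⁄ℝ] × Ω[A⁄ℝ]

variable {X : Derivation ℝ A A}

noncomputable instance : AddCommGroup (TW X) :=
  inferInstanceAs (AddCommGroup (Ω[A⁄ℝ] × Ω[A⁄ℝ]))

noncomputable instance : Module ℝ (TW X) :=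
  inferInstanceAs (Module ℝ (Ω[A⁄ℝ] × Ω[A⁄ℝ]))

def TW.fst (m : TW X) : Ω[A⁄ℝ] := Prod.fst m
def TW.snd (m : TW X) : Ω[A⁄ℝ] := Prod.snd m
def TW.mk (x y : Ω[A⁄ℝ]) : TW X := (x, y)

theorem TW.mk_eq {x y x' y' : Ω[A⁄ℝ]} (h1 : x = x') (h2 : y = y') :
    TW.mk (X := X) x y = TW.mk x' y' := by rw [h1, h2]

theorem TW.ext {m n : TW X} (h1 : m.fst = n.fst) (h2 : m.snd = n.snd) : m = n :=
  Prod.ext h1 h2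

@[simp] theorem TW.fst_mk (x y : Ω[A⁄ℝ]) : TW.fst (TW.mk (X := X) x y) = x := rfl
@[simp] theorem TW.snd_mk (x y : Ω[A⁄ℝ]) : TW.snd (TW.mk (X := X) x y) = y := rfl
@[simp] theorem TW.fst_add (m n : TW X) : (m + n).fst = m.fst + n.fst := rfl
@[simp] theorem TW.snd_add (m n : TW X) : (m + n).snd = m.snd + n.snd := rfl
@[simp] theorem TW.fst_zero : (0 : TW X).fst = 0 := rfl
@[simp] theorem TW.snd_zero : (0 : TW X).snd = 0 := rfl
@[simp] theorem TW.fst_rsmul (r : ℝ) (m : TW X) : (r • m).fst = r • m.fst := rfl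
@[simp] theorem TW.snd_rsmul (r : ℝ) (m : TW X) : (r • m).snd = r • m.snd := rfl

noncomputable instance : SMul A (TW X) :=
  ⟨fun a m => TW.mk (a • m.fst + X a • m.snd) (a • m.snd)⟩

@[simp] theorem TW.fst_smul (a : A) (m : TW X) :
    (a • m).fst = a • m.fst + X a • m.snd := rfl
@[simp] theorem TW.snd_smul (a : A) (m : TW X) : (a • m).snd = a • m.snd := rfl

noncomputable instance : Module A (TW X) where
  one_smul m := TW.ext (by simp [X.map_one_eq_zero]) (by simp)
  mul_smul a b m := TW.ext
    (by simp only [TW.fst_smul, TW.snd_smul, X.leibniz, smul_eq_mul, smul_add,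
          smul_smul, add_smul]
        module)
    (by simp [mul_smul])
  smul_zero a := TW.ext (by simp) (by simp)
  smul_add a m n := TW.ext
    (by simp only [TW.fst_smul, TW.snd_smul, TW.fst_add, TW.snd_add, smul_add]; abel)
    (by simp [smul_add])
  add_smul a b m := TW.ext
    (by simp only [TW.fst_smul, TW.snd_smul, map_add, add_smul, TW.fst_add, TW.snd_add]; abel)
    (by simp [add_smul])
  zero_smul m := TW.ext (by simp) (by simp)

noncomputable instance : IsScalarTower ℝ A (TW X) where
  smul_assoc r a m := TW.ext
    (by simp only [TW.fst_smul, TW.snd_smul, TW.fst_rsmul, TW.snd_rsmul, X.map_smul,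
          smul_assoc]
        module)
    (by simp [smul_assoc])

/-- The derivation `u ↦ (d (X u), d u)` into the twisted module. -/
noncomputable def ldDer (X : Derivation ℝ A A) : Derivation ℝ A (TW X) where
  toFun u := TW.mk (D ℝ A (X u)) (D ℝ A u)
  map_add' u v := TW.ext (by simp) (by simp)
  map_smul' r u := TW.ext (by simp) (by simp)
  map_one_eq_zero' := TW.ext (by simp) (by simp)
  leibniz' a b := TW.ext
    (by show D ℝ A (X (a * b)) = _
        simp only [X.leibniz, map_add, TW.fst_add, TW.fst_smul, TW.fst_mk, TW.snd_mk,
          smul_eq_mul, Derivation.leibniz, LinearMap.coe_mk, AddHom.coe_mk]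
        abel)
    (by show D ℝ A (a * b) = _
        simp only [TW.snd_add, TW.snd_smul, TW.snd_mk, Derivation.leibniz,
          LinearMap.coe_mk, AddHom.coe_mk])

noncomputable def ldLift (X : Derivation ℝ A A) : Ω[A⁄ℝ] →ₗ[A] TW X :=
  (ldDer X).liftKaehlerDifferential

/-- Second component of the lift is the identity. -/
theorem ldLift_snd (X : Derivation ℝ A A) (ω : Ω[A⁄ℝ]) : (ldLift X ω).snd = ω := by
  let sndL : TW X →ₗ[A] Ω[A⁄ℝ] :=
    { toFun := TW.snd, map_add' := fun m n => rfl, map_smul' := fun a m => rfl }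
  have : sndL.comp (ldLift X) = LinearMap.id := by
    apply Derivation.liftKaehlerDifferential_unique
    ext u
    show sndL (ldLift X (D ℝ A u)) = D ℝ A u
    rw [ldLift, Derivation.liftKaehlerDifferential_comp_D]
    rfl
  exact congrArg (fun f => f ω) this

/-- The Lie derivative of a 1-form along a derivation. -/
noncomputable def LD (X : Derivation ℝ A A) (ω : Ω[A⁄ℝ]) : Ω[A⁄ℝ] :=
  (ldLift X ω).fst

@[simp] theorem LD_d (X : Derivation ℝ A A) (u : A) :
    LD X (D ℝ A u) = D ℝ A (X u) := by
  rw [LD, ldLift, Derivation.liftKaehlerDifferential_comp_D]; rfl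

theorem LD_add (X : Derivation ℝ A A) (ω η : Ω[A⁄ℝ]) :
    LD X (ω + η) = LD X ω + LD X η := by
  unfold LD; rw [map_add]; rfl

theorem LD_sub (X : Derivation ℝ A A) (ω η : Ω[A⁄ℝ]) :
    LD X (ω - η) = LD X ω - LD X η := by
  unfold LD; rw [map_sub]; rfl

@[simp] theorem LD_zero (X : Derivation ℝ A A) : LD X 0 = 0 := by
  unfold LD; rw [map_zero]; rfl

theorem LD_smul (X : Derivation ℝ A A) (a : A) (ω : Ω[A⁄ℝ]) :
    LD X (a • ω) = a • LD X ω + X a • ω := by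
  unfold LD
  rw [map_smul, TW.fst_smul, ldLift_snd]

theorem LD_smul_d (X : Derivation ℝ A A) (a u : A) :
    LD X (a • D ℝ A u) = a • D ℝ A (X u) + X a • D ℝ A u := by
  rw [LD_smul, LD_d]

theorem LD_addX (X Y : Derivation ℝ A A) (ω : Ω[A⁄ℝ]) :
    LD (X + Y) ω = LD X ω + LD Y ω := by
  induction ω using omega_ind with
  | h0 => simp
  | hg a u =>
    simp only [LD_smul_d, Derivation.add_apply, map_add, smul_add, add_smul]
    abel
  | ha x y hx hy => rw [LD_add, LD_add, LD_add, hx, hy]; abel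

theorem LD_zeroX (ω : Ω[A⁄ℝ]) : LD (0 : Derivation ℝ A A) ω = 0 := by
  induction ω using omega_ind with
  | h0 => simp
  | hg a u => simp [LD_smul_d]
  | ha x y hx hy => rw [LD_add, hx, hy, add_zero]

theorem LD_negX (X : Derivation ℝ A A) (ω : Ω[A⁄ℝ]) : LD (-X) ω = - LD X ω := by
  have := LD_addX X (-X) ω
  rw [add_neg_cancel, LD_zeroX] at this
  first
  | exact eq_neg_of_add_eq_zero_left this.symm
  | exact eq_neg_of_add_eq_zero_right this.symm

theorem anchor_d_der (hP : IsPoissonBracket P) (u : A) :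
    anchor P hP (D ℝ A u) = ham P hP u :=
  Derivation.liftKaehlerDifferential_comp_D _ _

theorem anchor_zero (hP : IsPoissonBracket P) : anchor P hP 0 = 0 := map_zero _

theorem pair_zero_left (hP : IsPoissonBracket P) (η : Ω[A⁄ℝ]) :
    pairF P hP 0 η = 0 := map_zero _

theorem pair_zero_right (hP : IsPoissonBracket P) (ω : Ω[A⁄ℝ]) :
    pairF P hP ω 0 = 0 := by
  unfold pairF
  rw [anchor_zero, lift_eq_symm, map_zero, LinearMap.zero_apply]


theorem pzero1 (hP : IsPoissonBracket P) (a : A) : P 0 a = 0 := by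
  have := hP.1 0 0 a
  rw [add_zero] at this
  linear_combination -this

theorem pzero2 (hP : IsPoissonBracket P) (a : A) : P a 0 = 0 := by
  rw [psk' P hP, pzero1 P hP, neg_zero]

theorem pneg2 (hP : IsPoissonBracket P) (a b : A) : P a (-b) = - P a b := by
  have := hP.2.1 a b (-b)
  rw [add_neg_cancel, pzero2 P hP] at this
  linear_combination -this

theorem prev2 (hP : IsPoissonBracket P) (a b c : A) : P a (P b c) = - P a (P c b) := by
  rw [psk' P hP c b, pneg2 P hP]

/-- The Koszul bracket on 1-forms. -/
noncomputable def F (hP : IsPoissonBracket P) (ω η : Ω[A⁄ℝ]) : Ω[A⁄ℝ] :=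
  LD (anchor P hP η) ω - LD (anchor P hP ω) η - D ℝ A (pairF P hP ω η)

theorem F_add_left (hP : IsPoissonBracket P) (ω ω' η : Ω[A⁄ℝ]) :
    F P hP (ω + ω') η = F P hP ω η + F P hP ω' η := by
  unfold F
  rw [LD_add, map_add, LD_addX, pair_add_left, map_add]
  abel

theorem F_add_right (hP : IsPoissonBracket P) (ω η η' : Ω[A⁄ℝ]) :
    F P hP ω (η + η') = F P hP ω η + F P hP ω η' := by
  unfold F
  rw [LD_add, map_add, LD_addX, pair_add_right, map_add]
  abel

theorem F_zero_left (hP : IsPoissonBracket P) (η : Ω[A⁄ℝ]) :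
    F P hP 0 η = 0 := by
  unfold F
  rw [LD_zero, anchor_zero, LD_zeroX, pair_zero_left, map_zero]
  abel

theorem F_zero_right (hP : IsPoissonBracket P) (ω : Ω[A⁄ℝ]) :
    F P hP ω 0 = 0 := by
  unfold F
  rw [LD_zero, anchor_zero, LD_zeroX, pair_zero_right, map_zero]
  abel

theorem Fgen (hP : IsPoissonBracket P) (x u y v : A) :
    F P hP (x • D ℝ A u) (y • D ℝ A v) =
      (x * P u y) • D ℝ A v + (y * P x v) • D ℝ A u + (x * y) • D ℝ A (P u v) := by
  unfold F
  rw [pair_gen]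
  rw [LD_smul, LD_smul, LD_d, LD_d]
  rw [anchor_smul_d P hP y v u, anchor_smul_d P hP y v x,
    anchor_smul_d P hP x u v, anchor_smul_d P hP x u y]
  simp only [Derivation.leibniz]
  rw [psk' P hP v u]
  simp only [map_neg, smul_neg, neg_smul, smul_add, smul_smul]
  rw [psk' P hP y u]
  module

theorem LD_comm (X Y : Derivation ℝ A A) (ω : Ω[A⁄ℝ]) :
    LD ⁅X, Y⁆ ω = LD X (LD Y ω) - LD Y (LD X ω) := by
  induction ω using omega_ind with
  | h0 => simp
  | hg a u =>
    simp only [LD_smul_d, LD_add, Derivation.commutator_apply, map_sub, sub_smul, smul_sub]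
    abel
  | ha x y hx hy =>
    rw [LD_add, LD_add, LD_add, LD_add (X := X), LD_add (X := Y), hx, hy]
    abel

theorem pair_skew (hP : IsPoissonBracket P) (ω η : Ω[A⁄ℝ]) :
    pairF P hP ω η = - pairF P hP η ω := by
  rw [← add_eq_zero_iff_eq_neg]
  induction ω using omega_ind with
  | h0 => rw [pair_zero_left, pair_zero_right, add_zero]
  | hg a u =>
    induction η using omega_ind with
    | h0 => rw [pair_zero_left, pair_zero_right, add_zero]
    | hg b v =>
      rw [pair_gen, pair_gen]
      linear_combination (a * b) * psk P hP u v
    | ha x y hx hy =>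
      rw [pair_add_left, pair_add_right]
      linear_combination hx + hy
  | ha x y hx hy =>
    rw [pair_add_left, pair_add_right]
    linear_combination hx + hy

/-- The anchor is an anti-morphism for the Koszul bracket. -/
theorem anchor_F (hP : IsPoissonBracket P) (η θ : Ω[A⁄ℝ]) :
    anchor P hP (F P hP η θ) = - ⁅anchor P hP η, anchor P hP θ⁆ := by
  induction η using omega_ind with
  | h0 => rw [F_zero_left]; simp
  | hg y v =>
    induction θ using omega_ind with
    | h0 => rw [F_zero_right]; simp
    | hg z w =>
      ext a
      rw [Fgen]
      simp only [map_add, Derivation.add_apply, Derivation.neg_apply,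
        Derivation.commutator_apply]
      simp only [anchor_smul_d]
      rw [pleib1 P hP, pleib1 P hP]
      rw [psk' P hP v (P a w), psk' P hP w (P a v), prev2 P hP v a w]
      have hj := hP.2.2.2.2.1 a v w
      linear_combination (y*z) * hj + (y * P a w) * psk P hP v z
    | ha s t hs ht =>
      rw [F_add_right, map_add, hs, ht, map_add, lie_add]
      abel
  | ha s t hs ht =>
    rw [F_add_left, map_add, hs, ht, map_add, add_lie]
    abel

/-- Key invariance identity for the pairing. -/
theorem L3 (hP : IsPoissonBracket P) (ω η θ : Ω[A⁄ℝ]) :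
    anchor P hP ω (pairF P hP η θ) - pairF P hP ω (F P hP η θ) +
      (anchor P hP η (pairF P hP θ ω) - pairF P hP η (F P hP θ ω)) +
      (anchor P hP θ (pairF P hP ω η) - pairF P hP θ (F P hP ω η)) = 0 := by
  induction ω using omega_ind with
  | h0 =>
    simp [pair_zero_left, pair_zero_right, F_zero_left, F_zero_right, anchor_zero,
      anchor_smul_d, pzero1 P hP]
  | hg x u =>
    induction η using omega_ind with
    | h0 =>
      simp [pair_zero_left, pair_zero_right, F_zero_left, F_zero_right, anchor_zero,
        anchor_smul_d, pzero1 P hP]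
    | hg y v =>
      induction θ using omega_ind with
      | h0 =>
        simp [pair_zero_left, pair_zero_right, F_zero_left, F_zero_right, anchor_zero,
          anchor_smul_d, pzero1 P hP]
      | hg z w =>
        rw [Fgen, Fgen, Fgen]
        rw [pair_gen, pair_gen, pair_gen]
        simp only [pair_add_right, pair_gen]
        rw [anchor_smul_d, anchor_smul_d, anchor_smul_d]
        rw [pleib1 P hP (a := y), pleib1 P hP (a := z), pleib1 P hP (a := x),
          pleib1 P hP (a := z), pleib1 P hP (a := x), pleib1 P hP (a := y)]
        rw [psk' P hP u (P v w), psk' P hP v (P w u), psk' P hP w (P u v)]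
        have hj := hP.2.2.2.2.1 u v w
        linear_combination (-2*(x*y*z)) * hj + (-(x*z*P w v)) * psk P hP u y +
          (-(x*y*P u w)) * psk P hP v z + (x*y*P z v) * psk P hP w u +
          (z*y*P u v) * psk P hP x w + (-(z*y*P w x)) * psk P hP v u + (x*z*P y u) * psk P hP v w
      | ha s t hs ht =>
        simp only [F_add_left, F_add_right, pair_add_left, pair_add_right, map_add,
          Derivation.add_apply] at hs ht ⊢
        linear_combination hs + ht
    | ha s t hs ht =>
      simp only [F_add_left, F_add_right, pair_add_left, pair_add_right, map_add,
        Derivation.add_apply] at hs ht ⊢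
      linear_combination hs + ht
  | ha s t hs ht =>
    simp only [F_add_left, F_add_right, pair_add_left, pair_add_right, map_add,
      Derivation.add_apply] at hs ht ⊢
    linear_combination hs + ht

theorem F_def (hP : IsPoissonBracket P) (ω η : Ω[A⁄ℝ]) :
    F P hP ω η = LD (anchor P hP η) ω - LD (anchor P hP ω) η - D ℝ A (pairF P hP ω η) :=
  rfl

theorem pair_dd (hP : IsPoissonBracket P) (u v : A) :
    pairF P hP (D ℝ A u) (D ℝ A v) = P u v := by
  unfold pairF
  rw [Derivation.liftKaehlerDifferential_comp_D, anchor_d]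

theorem F_dd (hP : IsPoissonBracket P) (u v : A) :
    F P hP (D ℝ A u) (D ℝ A v) = D ℝ A (P u v) := by
  unfold F
  rw [LD_d, LD_d, pair_dd, anchor_d_der, anchor_d_der, ham_apply, ham_apply,
    psk' P hP v u, map_neg]
  abel

theorem F_skew (hP : IsPoissonBracket P) (ω η : Ω[A⁄ℝ]) :
    F P hP ω η = - F P hP η ω := by
  unfold F
  rw [pair_skew P hP ω η, map_neg]
  abel

theorem F_jacobi (hP : IsPoissonBracket P) (ω η θ : Ω[A⁄ℝ]) :
    F P hP ω (F P hP η θ) + F P hP η (F P hP θ ω) + F P hP θ (F P hP ω η) = 0 := by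
  have h3 := L3 P hP ω η θ
  have h3' := congrArg (D ℝ A) h3
  simp only [map_add, map_sub, map_zero] at h3'
  rw [F_def P hP ω (F P hP η θ), F_def P hP η (F P hP θ ω), F_def P hP θ (F P hP ω η)]
  rw [anchor_F P hP η θ, anchor_F P hP θ ω, anchor_F P hP ω η]
  simp only [LD_negX, LD_comm]
  rw [F_def P hP η θ, F_def P hP θ ω, F_def P hP ω η] at h3' ⊢
  simp only [LD_sub, LD_d]
  conv_rhs => rw [← h3']
  abel

/-- The extension bracket on `A ⊕ Ω`. -/
noncomputable def Cb (hP : IsPoissonBracket P) (l m : A × Ω[A⁄ℝ]) : A × Ω[A⁄ℝ] :=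
  (anchor P hP m.2 l.1 - anchor P hP l.2 m.1 - pairF P hP l.2 m.2, F P hP l.2 m.2)

theorem Cb_fst (hP : IsPoissonBracket P) (l m : A × Ω[A⁄ℝ]) :
    (Cb P hP l m).1 =
      anchor P hP m.2 l.1 - anchor P hP l.2 m.1 - pairF P hP l.2 m.2 := rfl

theorem Cb_snd (hP : IsPoissonBracket P) (l m : A × Ω[A⁄ℝ]) :
    (Cb P hP l m).2 = F P hP l.2 m.2 := rfl

end PoissonExt

open KaehlerDifferential in
/-- On `L̄ = A ⊕ D_A` (with `D_A = Ω[A⁄ℝ]` the Kähler differentials), the bracket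
`[(a,du),(b,dv)] = ({u,b} + {a,v} - {u,v}, d{u,v})`, extended biadditively, is a
Lie bracket (skew-symmetric, satisfying Jacobi); the projection `L̄ → D_A` is a
morphism of Lie algebras onto `D_A` with the bracket
`[a du, b dv] = a{u,b} dv + b{a,v} du + ab d{u,v}`; and the kernel `A` is central
in the sense that the bracket of two kernel elements vanishes. -/
theorem extension_bracket_is_lie {A : Type*} [CommRing A] [Algebra ℝ A]
    (P : A → A → A) (hP : IsPoissonBracket P) :
    ∃ (C : A × Ω[A⁄ℝ] → A × Ω[A⁄ℝ] → A × Ω[A⁄ℝ])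
      (B : Ω[A⁄ℝ] → Ω[A⁄ℝ] → Ω[A⁄ℝ]),
      -- biadditivity of C
      (∀ l m n, C (l + m) n = C l n + C m n) ∧
      (∀ l m n, C l (m + n) = C l m + C l n) ∧
      -- generator formula
      (∀ a b u v : A,
        C (a, D ℝ A u) (b, D ℝ A v)
          = (P u b + P a v - P u v, D ℝ A (P u v))) ∧
      -- skew-symmetry and Jacobi
      (∀ l m, C l m = - C m l) ∧
      (∀ l m n, C l (C m n) + C m (C n l) + C n (C l m) = 0) ∧
      -- the projection onto D_A is a Lie algebra morphism, where B is the
      -- Lie bracket on D_A extending [a du, b dv] = a{u,b}dv + b{a,v}du + ab d{u,v}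
      (∀ a b u v : A,
        B (a • D ℝ A u) (b • D ℝ A v) =
          (a * P u b) • D ℝ A v + (b * P a v) • D ℝ A u +
            (a * b) • D ℝ A (P u v)) ∧
      (∀ l m, (C l m).2 = B l.2 m.2) ∧
      -- the kernel A is central: the bracket of two kernel elements vanishes
      (∀ a b : A, C (a, 0) (b, 0) = 0) := by
  classical
  refine ⟨PoissonExt.Cb P hP, PoissonExt.F P hP, ?_, ?_, ?_, ?_, ?_, ?_, ?_, ?_⟩
  · -- left additivity
    intro l m n
    refine Prod.ext ?_ ?_
    · simp only [PoissonExt.Cb_fst, Prod.fst_add, Prod.snd_add, map_add,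
        Derivation.add_apply, PoissonExt.pair_add_left]
      ring
    · simp only [PoissonExt.Cb_snd, Prod.snd_add, PoissonExt.F_add_left]
  · -- right additivity
    intro l m n
    refine Prod.ext ?_ ?_
    · simp only [PoissonExt.Cb_fst, Prod.fst_add, Prod.snd_add, map_add,
        Derivation.add_apply, PoissonExt.pair_add_right]
      ring
    · simp only [PoissonExt.Cb_snd, Prod.snd_add, PoissonExt.F_add_right]
  · -- generator formula
    intro a b u v
    refine Prod.ext ?_ ?_
    · simp only [PoissonExt.Cb_fst]
      rw [PoissonExt.anchor_d, PoissonExt.anchor_d, PoissonExt.pair_dd]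
      linear_combination - PoissonExt.psk P hP u b
    · simp only [PoissonExt.Cb_snd]
      exact PoissonExt.F_dd P hP u v
  · -- skew
    intro l m
    refine Prod.ext ?_ ?_
    · simp only [PoissonExt.Cb_fst, Prod.fst_neg]
      rw [PoissonExt.pair_skew P hP l.2 m.2]
      ring
    · simp only [PoissonExt.Cb_snd, Prod.snd_neg]
      exact PoissonExt.F_skew P hP l.2 m.2
  · -- Jacobi
    intro l m n
    refine Prod.ext ?_ ?_
    · simp only [PoissonExt.Cb_fst, PoissonExt.Cb_snd, Prod.fst_add, Prod.fst_zero]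
      simp only [PoissonExt.anchor_F P hP, Derivation.neg_apply,
        Derivation.commutator_apply, map_sub]
      linear_combination PoissonExt.L3 P hP l.2 m.2 n.2
    · simp only [PoissonExt.Cb_snd, Prod.snd_add, Prod.snd_zero]
      exact PoissonExt.F_jacobi P hP l.2 m.2 n.2
  · -- B generator formula
    intro a b u v
    exact PoissonExt.Fgen P hP a u b v
  · intro l m
    rfl
  · -- kernel central
    intro a b
    refine Prod.ext ?_ ?_
    · simp only [PoissonExt.Cb_fst, Prod.fst_zero]
      rw [PoissonExt.pair_zero_left]
      simp
    · simp only [PoissonExt.Cb_snd, Prod.snd_zero]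
      exact PoissonExt.F_zero_left P hP 0
end

section
/- For the Lie algebra sp(ℓ,R), the Killing form β satisfies β(a,b) = 2(ℓ+1)·tr(ab) for all a, b ∈ sp(ℓ,R). -/
/-!
The map `σ x = J xᵀ J` is an involution of `gl_{2ℓ}` whose fixed points are exactly `sp(ℓ)`,
so `(1 + σ) / 2` projects `gl_{2ℓ}` onto `sp(ℓ)` and `β(a, b) = ½ tr((1 + σ) ∘ ad a ∘ ad b)`, the
trace being taken on all of `gl_{2ℓ}`. Expanding `ad a ∘ ad b` into the maps `x ↦ C x D`, whose
trace is `tr C · tr D`, gives `tr(ad a ∘ ad b) = 4ℓ tr(ab)` (as `tr a = 0`), while the same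
expansion composed with `σ` gives `tr(σ ∘ ad a ∘ ad b) = 4 tr(ab)`.
-/

open LinearMap Matrix LieAlgebra

attribute [local instance 100] LieRing.ofAssociativeRing

theorem LieSubalgebra.killingForm_eq_trace_comp_of_isProj {K L : Type*} [Field K] [LieRing L]
    [LieAlgebra K L] [FiniteDimensional K L] (H : LieSubalgebra K L) {π : Module.End K L}
    (hπ : IsProj H.toSubmodule π) (x y : H) :
    killingForm K H x y = trace K L (π ∘ₗ ad K L x ∘ₗ ad K L y) := by
  rw [killingForm_apply_apply, ← trace_restrict_eq_of_forall_mem H.toSubmodule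
    (π ∘ₗ ad K L x ∘ₗ ad K L y) fun z ↦ hπ.map_mem _]
  congr 1
  ext z
  exact (hπ.map_id _ (H.lie_mem x.2 (H.lie_mem y.2 z.2))).symm

section Trace

variable {R : Type*} [CommRing R] {m n : Type*} [Fintype m] [Fintype n] [DecidableEq m]
  [DecidableEq n]

theorem LinearMap.trace_eq_sum_apply_single (f : Module.End R (Matrix m n R)) :
    trace R _ f = ∑ i, ∑ j, f (Matrix.single i j (1 : R)) i j := by
  rw [trace_eq_matrix_trace R (stdBasis R m n), Matrix.trace, Fintype.sum_prod_type]
  simp only [diag_apply, toMatrix_apply, stdBasis_eq_single]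
  rfl

theorem Matrix.mul_single_one_mul_apply {l o : Type*} [Fintype l] (C : Matrix l m R)
    (D : Matrix n o R) (k : m) (k' : n) (i : l) (j : o) :
    (C * Matrix.single k k' (1 : R) * D) i j = C i k * D k' j := by
  simp [mul_apply, single_apply, ite_and, Finset.sum_ite_eq]

theorem LinearMap.trace_mulLeft_comp_mulRight (C D : Matrix n n R) :
    trace R _ (mulLeft R C ∘ₗ mulRight R D) = C.trace * D.trace := by
  simp [trace_eq_sum_apply_single, ← mul_assoc, mul_single_one_mul_apply, Matrix.trace,
    Finset.sum_mul_sum]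

theorem LinearMap.trace_mulLeft_comp_mulRight_comp_transpose (C D : Matrix n n R) :
    trace R _ (mulLeft R C ∘ₗ mulRight R D ∘ₗ (transposeLinearEquiv n n R R).toLinearMap)
      = (C * Dᵀ).trace := by
  calc _ = ∑ i, ∑ j, C i j * D i j := by
        simp [trace_eq_sum_apply_single, ← mul_assoc, mul_single_one_mul_apply]
    _ = (C * Dᵀ).trace := by simp [Matrix.trace, mul_apply]

theorem Matrix.ad_comp_ad (A B : Matrix n n R) :
    ad R _ A ∘ₗ ad R _ B = mulLeft R (A * B) ∘ₗ mulRight R 1 - mulLeft R A ∘ₗ mulRight R B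
      - mulLeft R B ∘ₗ mulRight R A + mulLeft R 1 ∘ₗ mulRight R (B * A) := by
  ext1 x
  simp only [coe_comp, Function.comp_apply, ad_apply, Ring.lie_def, LinearMap.add_apply,
    LinearMap.sub_apply, mulLeft_apply, mulRight_apply]
  noncomm_ring

theorem Matrix.killingForm_eq (A B : Matrix n n R) :
    killingForm R (Matrix n n R) A B
      = 2 * Fintype.card n * (A * B).trace - 2 * A.trace * B.trace := by
  rw [killingForm_apply_apply, ad_comp_ad]
  simp only [map_add, map_sub, trace_mulLeft_comp_mulRight, trace_one, trace_mul_comm B A]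
  ring

end Trace

namespace LieAlgebra.Symplectic

variable (l R : Type*) [Fintype l] [DecidableEq l] [CommRing R]

/-- Minus the adjoint with respect to the form `J`, since `J⁻¹ = -J`. -/
noncomputable def involution : Module.End R (Matrix (l ⊕ l) (l ⊕ l) R) :=
  mulLeft R (J l R) ∘ₗ mulRight R (J l R) ∘ₗ (transposeLinearEquiv _ _ R R).toLinearMap

variable {l R}

@[simp]
theorem involution_apply (x : Matrix (l ⊕ l) (l ⊕ l) R) :
    involution l R x = J l R * xᵀ * J l R := by
  simp [involution, mul_assoc]

theorem involution_one : involution l R 1 = -1 := by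
  simp [J_squared]

theorem J_mul_J_mul (x : Matrix (l ⊕ l) (l ⊕ l) R) : J l R * (J l R * x) = -x := by
  rw [← mul_assoc, J_squared, neg_one_mul]

theorem involution_mul (x y : Matrix (l ⊕ l) (l ⊕ l) R) :
    involution l R (x * y) = -(involution l R y * involution l R x) := by
  simp [mul_assoc, J_mul_J_mul]

theorem involution_involution (x : Matrix (l ⊕ l) (l ⊕ l) R) :
    involution l R (involution l R x) = x := by
  simp [J_transpose, mul_assoc, J_mul_J_mul, J_squared]

theorem mem_sp_iff_involution_eq {A : Matrix (l ⊕ l) (l ⊕ l) R} :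
    A ∈ sp l R ↔ involution l R A = A := by
  rw [sp, mem_skewAdjointMatricesLieSubalgebra, mem_skewAdjointMatricesSubmodule,
    Matrix.IsSkewAdjoint, Matrix.IsAdjointPair, involution_apply]
  constructor
  · intro h
    rw [mul_assoc, h, mul_neg, mul_neg, J_mul_J_mul, neg_neg]
  · intro h
    conv_rhs => rw [← h]
    simp [mul_assoc, J_mul_J_mul]

theorem trace_eq_zero_of_mem_sp {A : Matrix (l ⊕ l) (l ⊕ l) R} (hA : A ∈ sp l R) :
    A.trace = 0 := by
  rw [sp, mem_skewAdjointMatricesLieSubalgebra, mem_skewAdjointMatricesSubmodule] at hA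
  have h i : A (.inr i) (.inr i) = -A (.inl i) (.inl i) := by
    simpa [J, mul_apply, Fintype.sum_sum_type, one_apply] using
      congr_fun₂ hA (Sum.inr i) (Sum.inl i)
  simp [Matrix.trace, Fintype.sum_sum_type, h]

theorem trace_involution_comp_mulLeft_comp_mulRight (C D : Matrix (l ⊕ l) (l ⊕ l) R) :
    trace R _ (involution l R ∘ₗ mulLeft R C ∘ₗ mulRight R D)
      = -(involution l R D * C).trace := by
  have h : involution l R ∘ₗ mulLeft R C ∘ₗ mulRight R D
      = mulLeft R (J l R * Dᵀ) ∘ₗ mulRight R (Cᵀ * J l R) ∘ₗ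
        (transposeLinearEquiv _ _ R R).toLinearMap := by
    ext1 x
    simp [mul_assoc]
  rw [h, trace_mulLeft_comp_mulRight_comp_transpose]
  simp [J_transpose, mul_assoc]

theorem trace_involution_comp_ad_comp_ad {A B : Matrix (l ⊕ l) (l ⊕ l) R} (hA : A ∈ sp l R)
    (hB : B ∈ sp l R) :
    trace R _ (involution l R ∘ₗ ad R _ A ∘ₗ ad R _ B) = 4 * (A * B).trace := by
  rw [mem_sp_iff_involution_eq] at hA hB
  simp only [ad_comp_ad, comp_add, comp_sub, map_add, map_sub,
    trace_involution_comp_mulLeft_comp_mulRight, involution_one, involution_mul, hA, hB]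
  simp only [neg_mul, one_mul, mul_one, trace_neg, trace_mul_comm B A]
  ring

theorem isProj_sp [Invertible (2 : R)] :
    IsProj (sp l R).toSubmodule ((⅟2 : R) • (LinearMap.id + involution l R)) where
  map_mem x := by
    rw [LieSubalgebra.mem_toSubmodule, mem_sp_iff_involution_eq]
    simp only [LinearMap.smul_apply, LinearMap.add_apply, id_apply, map_smul, map_add,
      involution_involution, add_comm]
  map_id x hx := by
    rw [LieSubalgebra.mem_toSubmodule, mem_sp_iff_involution_eq] at hx
    rw [LinearMap.smul_apply, LinearMap.add_apply, id_apply, hx, ← two_smul R x, smul_smul,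
      invOf_mul_self, one_smul]

theorem killingForm_sp_eq {K : Type*} [Field K] [Invertible (2 : K)] (a b : sp l K) :
    killingForm K (sp l K) a b
      = 2 * (Fintype.card l + 1) * ((a : Matrix (l ⊕ l) (l ⊕ l) K) * b).trace := by
  rw [LieSubalgebra.killingForm_eq_trace_comp_of_isProj _ isProj_sp, smul_comp, add_comp, id_comp, map_smul, map_add, ← killingForm_apply_apply, killingForm_eq,
    trace_involution_comp_ad_comp_ad a.2 b.2, trace_eq_zero_of_mem_sp a.2, Fintype.card_sum]
  set t := ((a : Matrix (l ⊕ l) (l ⊕ l) K) * b).trace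
  rw [smul_eq_mul, ← invOf_mul_cancel_left (2 : K) (2 * (Fintype.card l + 1) * t)]
  congr 1
  push_cast
  ring

end LieAlgebra.Symplectic

/-- For the symplectic Lie algebra `sp(ℓ,ℝ)` of real `2ℓ × 2ℓ` matrices `a` with
`ᵗa·J + J·a = 0`, the Killing form satisfies `β(a,b) = 2(ℓ+1)·tr(ab)`. -/
theorem killingForm_sp (ℓ : ℕ)
    (a b : LieAlgebra.Symplectic.sp (Fin ℓ) ℝ) :
    killingForm ℝ (LieAlgebra.Symplectic.sp (Fin ℓ) ℝ) a b
      = 2 * ((ℓ : ℝ) + 1) *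
          Matrix.trace ((a : Matrix (Fin ℓ ⊕ Fin ℓ) (Fin ℓ ⊕ Fin ℓ) ℝ) *
            (b : Matrix (Fin ℓ ⊕ Fin ℓ) (Fin ℓ ⊕ Fin ℓ) ℝ)) := by
  rw [LieAlgebra.Symplectic.killingForm_sp_eq, Fintype.card_fin]
end

section
/- For a single particle (ℓ = 1, s ≥ 2), the image of the zero level set of the angular momentum μ(q,p) = qᵗp - pᵗq under the map (q,p) ↦ (|q|² - |p|², 2q·p, |q|² + |p|²) =: (x, y, r) is exactly the semicone {(x,y,r) : x² + y² = r², r ≥ 0}; in particular, if qᵗp = pᵗq then (|q|²-|p|²)² + (2q·p)² = (|q|²+|p|²)². -/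
open Matrix Finset

/-- For a single particle in `ℝ^s` (`s ≥ 2`), the image of the zero level set of
the angular momentum `μ(q,p) = qᵗp - pᵗq` under
`(q,p) ↦ (|q|² - |p|², 2 q·p, |q|² + |p|²)` is exactly the semicone
`{(x,y,r) : x² + y² = r², r ≥ 0}`. -/
theorem single_particle_reduced_space_is_semicone (s : ℕ) (hs : 2 ≤ s) :
    (∀ q p : Fin s → ℝ, vecMulVec q p - vecMulVec p q = 0 →
      ((∑ i, q i ^ 2) - ∑ i, p i ^ 2) ^ 2 + (2 * ∑ i, q i * p i) ^ 2
        = ((∑ i, q i ^ 2) + ∑ i, p i ^ 2) ^ 2) ∧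
    (∀ x y r : ℝ, x ^ 2 + y ^ 2 = r ^ 2 → 0 ≤ r →
      ∃ q p : Fin s → ℝ, vecMulVec q p - vecMulVec p q = 0 ∧
        (∑ i, q i ^ 2) - (∑ i, p i ^ 2) = x ∧
        2 * (∑ i, q i * p i) = y ∧
        (∑ i, q i ^ 2) + (∑ i, p i ^ 2) = r) := by
  constructor
  · intro q p h
    have h' : ∀ i j, q i * p j = p i * q j := by
      intro i j
      have := congrFun (congrFun h i) j
      simp [vecMulVec] at this
      linarith
    have key : (∑ i, q i * p i) ^ 2 = (∑ i, q i ^ 2) * (∑ i, p i ^ 2) := by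
      rw [sq, Finset.sum_mul_sum, Finset.sum_mul_sum]
      refine Finset.sum_congr rfl fun i _ => Finset.sum_congr rfl fun j _ => ?_
      have e := h' i j
      calc (q i * p i) * (q j * p j) = (p i * q j) * (q i * p j) := by ring
        _ = (q i * p j) * (q i * p j) := by rw [e]
        _ = q i ^ 2 * p j ^ 2 := by ring
    nlinarith [key]
  · intro x y r hxy hr
    have hxr : |x| ≤ r := by
      rw [abs_le]
      constructor <;> nlinarith [sq_nonneg y]
    have h1 : 0 ≤ (r + x) / 2 := by cases abs_le.mp hxr; linarith
    have h2 : 0 ≤ (r - x) / 2 := by cases abs_le.mp hxr; linarith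
    set a : ℝ := Real.sqrt ((r + x) / 2) with ha
    set b : ℝ := if 0 ≤ y then Real.sqrt ((r - x) / 2) else -Real.sqrt ((r - x) / 2) with hb
    have ha2 : a ^ 2 = (r + x) / 2 := Real.sq_sqrt h1
    have hb2 : b ^ 2 = (r - x) / 2 := by
      rw [hb]; split_ifs
      · exact Real.sq_sqrt h2
      · rw [neg_sq]; exact Real.sq_sqrt h2
    have hab : 2 * (a * b) = y := by
      have hsq : (2 * (a * b)) ^ 2 = y ^ 2 := by
        have : (2 * (a * b)) ^ 2 = 4 * (a ^ 2 * b ^ 2) := by ring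
        rw [this, ha2, hb2]; nlinarith
      have habs : |2 * (a * b)| = |y| := by
        rw [← Real.sqrt_sq_eq_abs, ← Real.sqrt_sq_eq_abs, hsq]
      have hanneg : 0 ≤ a := Real.sqrt_nonneg _
      by_cases hy : 0 ≤ y
      · have hbnn : 0 ≤ b := by rw [hb, if_pos hy]; exact Real.sqrt_nonneg _
        rwa [abs_of_nonneg (by positivity), abs_of_nonneg hy] at habs
      · have hbnp : b ≤ 0 := by
          rw [hb, if_neg hy]; exact neg_nonpos.mpr (Real.sqrt_nonneg _)
        push_neg at hy
        have := abs_of_nonpos (by nlinarith : 2 * (a * b) ≤ 0)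
        rw [this, abs_of_nonpos hy.le] at habs
        linarith
    have i0 : Fin s := ⟨0, by omega⟩
    refine ⟨fun i => if i = i0 then a else 0, fun i => if i = i0 then b else 0, ?_, ?_, ?_, ?_⟩
    · ext i j
      simp [vecMulVec]
      split_ifs <;> ring
    · simp [ite_pow, Finset.sum_ite_eq', ha2, hb2]; ring
    · simp [ite_mul, mul_ite, Finset.sum_ite_eq']; linarith [hab]
    · simp [ite_pow, Finset.sum_ite_eq', ha2, hb2]; ring
end
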